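/- The proportion of graphs on n labelled vertices that are asymmetric tends to 1 as n tends to infinity. -/

import Mathlib

open SimpleGraph

/-- The `n`-dimensional hypercube graph `Q_n` on vertex set `{0,1}^n`:
two vertices are adjacent iff they differ in exactly one coordinate. -/
def hypercube (n : ℕ) : SimpleGraph (Fin n → Bool) where
  Adj u v := hammingDist u v = 1
  symm := ⟨fun u v h => by simpa [hammingDist_comm] using h⟩
  loopless := ⟨fun u h => by simp [hammingDist_self] at h⟩

instance hypercube.adjDecidable (n : ℕ) : DecidableRel (hypercube n).Adj :=
  fun u v => inferInstanceAs (Decidable (hammingDist u v = 1))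

/-- A rotation system on a graph: a permutation of the darts preserving tails
(locally, a cyclic ordering of the darts emanating from each vertex).  A rotation
system encodes a cellular embedding of the graph into a closed orientable surface. -/
structure RotationSystem {V : Type*} (G : SimpleGraph V) where
  toPerm : Equiv.Perm G.Dart
  fst_fixed : ∀ d : G.Dart, (toPerm d).toProd.1 = d.toProd.1

/-- The involution of darts reversing directions, as a permutation. -/
def dartFlip {V : Type*} (G : SimpleGraph V) : Equiv.Perm G.Dart :=
  ⟨SimpleGraph.Dart.symm, SimpleGraph.Dart.symm,
    SimpleGraph.Dart.symm_symm, SimpleGraph.Dart.symm_symm⟩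

/-- The face-tracing permutation of a rotation system. -/
def RotationSystem.facePerm {V : Type*} {G : SimpleGraph V} (rs : RotationSystem G) :
    Equiv.Perm G.Dart :=
  rs.toPerm * dartFlip G

/-- The setoid on `α` whose classes are the cycles (orbits) of a permutation. -/
def cycleSetoid {α : Type*} (π : Equiv.Perm α) : Setoid α :=
  ⟨π.SameCycle, Equiv.Perm.SameCycle.refl π, Equiv.Perm.SameCycle.symm,
    Equiv.Perm.SameCycle.trans⟩

/-- The number of faces of the embedding described by a rotation system:
the number of orbits of the face-tracing permutation. -/
noncomputable def RotationSystem.numFaces {V : Type*} {G : SimpleGraph V} (rs : RotationSystem G) : ℕ :=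
  Nat.card (Quotient (cycleSetoid rs.facePerm))

/-- The (orientable) genus of a graph: the least `g` such that the graph admits a
cellular embedding (i.e. a rotation system) into a surface whose Euler characteristic
bookkeeping gives genus `g`, via Euler's formula `V - E + F = 2c - 2g`. -/
noncomputable def SimpleGraph.genus {V : Type*} (G : SimpleGraph V) : ℕ :=
  sInf {g : ℕ | ∃ rs : RotationSystem G,
    (Nat.card V : ℤ) - Nat.card G.edgeSet + rs.numFaces
      = 2 * Nat.card G.ConnectedComponent - 2 * g}

/-- The automorphism group of a simple graph, as a subgroup of the permutations
of the vertex set. -/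
def SimpleGraph.autGroup {V : Type*} (G : SimpleGraph V) : Subgroup (Equiv.Perm V) where
  carrier := {σ | ∀ u v : V, G.Adj (σ u) (σ v) ↔ G.Adj u v}
  one_mem' := by intro u v; rfl
  mul_mem' := by
    intro σ τ hσ hτ u v
    simpa [Equiv.Perm.mul_apply, hσ (τ u) (τ v)] using hτ u v
  inv_mem' := by
    intro σ hσ u v
    simpa using (hσ (σ⁻¹ u) (σ⁻¹ v)).symm

/-!
A graph with a nontrivial automorphism is fixed by some permutation `σ ≠ 1` of the vertices, and
a graph fixed by `σ` is a union of orbits of `σ` acting on vertex pairs. If `σ` moves `m` of the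
`n` vertices, it moves at least `m (n - 2) / 2` pairs, so it has at most
`C(n, 2) - m (n - 2) / 4` orbits on pairs and fixes at most `2 ^ (C(n, 2) - m (n - 2) / 4)`
graphs. At most `n ^ (2 m)` permutations move exactly `m` vertices, so the union bound over
`σ ≠ 1` shows that the proportion of non-asymmetric graphs is `O(n ^ 5 ρ ^ (2 n))` for a
constant `ρ < 1`.
-/

open Finset Equiv Equiv.Perm Filter Topology

section PermutationOrbits

variable {α : Type*}

theorem Equiv.Perm.SameCycle.apply_eq_of_invariant [Finite α] {β : Type*} {π : Perm α}
    {f : α → β} (hf : ∀ x, f (π x) = f x) {x y : α} (h : π.SameCycle x y) : f x = f y := by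
  obtain ⟨i, rfl⟩ := h.exists_nat_pow_eq
  clear h
  induction i with
  | zero => rfl
  | succ k ih => rw [pow_succ', Perm.mul_apply, hf, ih]

theorem Equiv.Perm.card_invariant_fun_le [Finite α] {β : Type*} [Finite β] (π : Perm α) :
    Nat.card {f : α → β // ∀ x, f (π x) = f x} ≤
      Nat.card β ^ Nat.card (Quotient (SameCycle.setoid π)) := by
  rw [← Nat.card_fun]
  refine Nat.card_le_card_of_injective
    (fun f => Quotient.lift f.1 fun _ _ => SameCycle.apply_eq_of_invariant f.2) ?_
  intro f g hfg
  exact Subtype.ext <| funext fun x => congrFun hfg ⟦x⟧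

/-- Two copies of the set of cycles inject into `α ⊕ {x // π x = x}`: the cycle of its
representative `x` goes to `x` and to `π x`, or to the fixed point `x` when `π x = x`. -/
theorem Equiv.Perm.two_mul_card_quotient_sameCycle_add_card_support_le [Fintype α]
    [DecidableEq α] (π : Perm α) :
    2 * Nat.card (Quotient (SameCycle.setoid π)) + #π.support ≤ 2 * Fintype.card α := by
  let rep : Quotient (SameCycle.setoid π) → α := Quotient.out
  have hrep : Function.Injective rep := Quotient.out_injective
  let second : Quotient (SameCycle.setoid π) → α ⊕ {x // π x = x} := fun q =>
    if h : π (rep q) = rep q then .inr ⟨rep q, h⟩ else .inl (π (rep q))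
  have hsecond : Function.Injective second := by
    intro q q' h
    simp only [second] at h
    split_ifs at h <;> simp_all [hrep.eq_iff]
  have hdisjoint : ∀ q q', (.inl (rep q) : α ⊕ {x // π x = x}) ≠ second q' := by
    intro q q' h
    simp only [second] at h
    split_ifs at h with hfix
    simp only [Sum.inl.injEq] at h
    have hq : q = q' := by
      rw [← Quotient.out_eq q, ← Quotient.out_eq q']
      refine Quotient.sound ?_
      change π.SameCycle (rep q) (rep q')
      rw [h]
      exact sameCycle_apply_left.mpr (SameCycle.refl _ _)
    exact hfix (hq ▸ h).symm
  have hcard := Nat.card_le_card_of_injective _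
    (Function.Injective.sumElim (Sum.inl_injective.comp hrep) hsecond hdisjoint)
  have hfixed : Nat.card {x // π x = x} + #π.support = Fintype.card α := by
    rw [Nat.card_eq_fintype_card, Fintype.card_subtype, Perm.support,
      card_filter_add_card_filter_not, card_univ]
  rw [Nat.card_sum, Nat.card_sum, Nat.card_eq_fintype_card (α := α)] at hcard
  omega

end PermutationOrbits

section EdgeSlots

variable {V : Type*}

abbrev EdgeSlot (V : Type*) := {e : Sym2 V // ¬ e.IsDiag}

def SimpleGraph.equivEdgeIndicator : SimpleGraph V ≃ (EdgeSlot V → Prop) where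
  toFun G e := e.1 ∈ G.edgeSet
  invFun f := fromEdgeSet {e | ∃ h, f ⟨e, h⟩}
  left_inv G := by
    ext u v
    simp only [fromEdgeSet_adj, Set.mem_ofPred_eq, mem_edgeSet]
    exact ⟨fun ⟨⟨_, h⟩, _⟩ => h,
      fun h => ⟨⟨by simpa using G.ne_of_adj h, h⟩, G.ne_of_adj h⟩⟩
  right_inv f := by
    funext ⟨e, he⟩
    simp [he]

theorem SimpleGraph.natCard_eq_two_pow [Fintype V] [DecidableEq V] :
    Nat.card (SimpleGraph V) = 2 ^ (Fintype.card V).choose 2 := by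
  rw [Nat.card_congr equivEdgeIndicator, Nat.card_fun, Nat.card_eq_fintype_card (α := Prop),
    Fintype.card_prop, Nat.card_eq_fintype_card, Sym2.card_subtype_not_diag]

def EdgeSlot.perm (σ : Perm V) : Perm (EdgeSlot V) :=
  Equiv.subtypeEquiv
    ⟨Sym2.map σ, Sym2.map σ.symm, fun e => by simp [Sym2.map_map],
      fun e => by simp [Sym2.map_map]⟩
    fun e => (Sym2.isDiag_map σ.injective).not.symm

theorem EdgeSlot.perm_apply_val (σ : Perm V) (e : EdgeSlot V) :
    (EdgeSlot.perm σ e).1 = e.1.map σ := rfl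

theorem SimpleGraph.equivEdgeIndicator_perm_of_mem_autGroup {G : SimpleGraph V} {σ : Perm V}
    (hσ : σ ∈ G.autGroup) (e : EdgeSlot V) :
    equivEdgeIndicator G (EdgeSlot.perm σ e) = equivEdgeIndicator G e := by
  obtain ⟨e, he⟩ := e
  induction e using Sym2.ind with
  | _ u v => exact propext (hσ u v)

theorem SimpleGraph.card_mem_autGroup_le [Finite V] (σ : Perm V) :
    Nat.card {G : SimpleGraph V // σ ∈ G.autGroup} ≤
      2 ^ Nat.card (Quotient (SameCycle.setoid (EdgeSlot.perm σ))) := by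
  calc Nat.card {G : SimpleGraph V // σ ∈ G.autGroup}
      ≤ Nat.card {f : EdgeSlot V → Prop // ∀ e, f (EdgeSlot.perm σ e) = f e} :=
        Nat.card_le_card_of_injective
          (fun G => ⟨equivEdgeIndicator G.1, equivEdgeIndicator_perm_of_mem_autGroup G.2⟩)
          fun G H h => Subtype.ext (equivEdgeIndicator.injective (congrArg Subtype.val h))
    _ ≤ 2 ^ Nat.card (Quotient (SameCycle.setoid (EdgeSlot.perm σ))) := by
        rw [← Fintype.card_prop, ← Nat.card_eq_fintype_card]
        exact (EdgeSlot.perm σ).card_invariant_fun_le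

end EdgeSlots

section MovedEdges

variable {V : Type*} [Fintype V] [DecidableEq V]

/-- If `σ u ≠ u`, then `σ` moves the edge `s(u, w)` for every `w ∉ {u, σ u}`, and each edge
arises in this way from at most two pairs `(u, w)`. -/
theorem EdgeSlot.card_support_mul_le_two_mul_card_support_perm (σ : Perm V) :
    #σ.support * (Fintype.card V - 2) ≤ 2 * #(EdgeSlot.perm σ).support := by
  let T := {p ∈ σ.support ×ˢ (univ : Finset V) | p.2 ≠ p.1 ∧ p.2 ≠ σ p.1}
  have hfiber_vertex : ∀ u ∈ σ.support, Fintype.card V - 2 ≤ #{p ∈ T | p.1 = u} := by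
    intro u hu
    have hpair : #({u, σ u} : Finset V) = 2 := card_pair (Perm.mem_support.mp hu).symm
    calc Fintype.card V - 2 = #((univ \ {u, σ u}).image (u, ·)) := by
          rw [card_image_of_injective _ (Prod.mk_right_injective u),
            card_sdiff_of_subset (subset_univ _), card_univ, hpair]
      _ ≤ #{p ∈ T | p.1 = u} := card_le_card fun p hp => by
          obtain ⟨w, hw, rfl⟩ := mem_image.mp hp
          simp only [Finset.mem_sdiff, Finset.mem_insert, Finset.mem_singleton, not_or,
            Finset.mem_univ, true_and] at hw
          simp [T, hu, hw]
  have hmaps : ∀ p ∈ T,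
      s(p.1, p.2) ∈ (EdgeSlot.perm σ).support.map (Function.Embedding.subtype _) := by
    intro p hp
    simp only [T, mem_filter, mem_product, Perm.mem_support] at hp
    obtain ⟨⟨hu, -⟩, hw, hwσ⟩ := hp
    refine mem_map.mpr ⟨⟨s(p.1, p.2), by simpa using Ne.symm hw⟩, ?_, rfl⟩
    rw [Perm.mem_support, Ne, Subtype.ext_iff, EdgeSlot.perm_apply_val, Sym2.map_mk, Sym2.eq_iff]
    rintro (⟨h, -⟩ | ⟨h, -⟩)
    exacts [hu h, hwσ h.symm]
  have hfiber_edge : ∀ e ∈ (EdgeSlot.perm σ).support.map (Function.Embedding.subtype _),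
      #{p ∈ T | s(p.1, p.2) = e} ≤ 2 := by
    intro e _
    induction e using Sym2.ind with
    | _ a b =>
      refine (card_le_card (t := {(a, b), (b, a)}) fun p hp => ?_).trans card_le_two
      simp only [mem_filter, Sym2.eq_iff] at hp
      rcases hp.2 with ⟨h1, h2⟩ | ⟨h1, h2⟩ <;> simp [Prod.ext_iff, h1, h2]
  calc #σ.support * (Fintype.card V - 2) ≤ #T :=
        (mul_comm _ _).le.trans (mul_card_image_le_card_of_maps_to
          (fun p hp => (mem_product.mp (mem_filter.mp hp).1).1) _ hfiber_vertex)
    _ ≤ 2 * #((EdgeSlot.perm σ).support.map (Function.Embedding.subtype _)) :=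
        card_le_mul_card_image_of_maps_to hmaps 2 hfiber_edge
    _ = 2 * #(EdgeSlot.perm σ).support := by rw [card_map]

end MovedEdges

section FixedGraphs

variable {V : Type*} [Fintype V] [DecidableEq V]

theorem EdgeSlot.four_mul_card_quotient_sameCycle_perm_add_le (σ : Perm V) :
    4 * Nat.card (Quotient (SameCycle.setoid (EdgeSlot.perm σ))) +
        #σ.support * (Fintype.card V - 2) ≤ 4 * (Fintype.card V).choose 2 := by
  have horbits := (EdgeSlot.perm σ).two_mul_card_quotient_sameCycle_add_card_support_le
  have hmoved := EdgeSlot.card_support_mul_le_two_mul_card_support_perm σ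
  rw [Sym2.card_subtype_not_diag] at horbits
  omega

theorem SimpleGraph.card_mem_autGroup_le_pow {ρ : ℝ} (hρ0 : 0 ≤ ρ) (hρ : 1 / 2 ≤ ρ ^ 8)
    (hV : 4 ≤ Fintype.card V) (σ : Perm V) :
    (Nat.card {G : SimpleGraph V // σ ∈ G.autGroup} : ℝ) ≤
      2 ^ (Fintype.card V).choose 2 * ρ ^ (Fintype.card V * #σ.support) := by
  -- for `n ≥ 4` the exponent `m (n - 2) / 4` is at least `n m / 8`
  set n := Fintype.card V
  set q := Nat.card (Quotient (SameCycle.setoid (EdgeSlot.perm σ)))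
  set m := #σ.support
  have hexp : 8 * q + n * m ≤ 8 * n.choose 2 := by
    have h : 4 * q + m * (n - 2) ≤ 4 * n.choose 2 :=
      EdgeSlot.four_mul_card_quotient_sameCycle_perm_add_le σ
    have : n * m ≤ 2 * (m * (n - 2)) := by
      rw [mul_comm n, mul_left_comm]; exact Nat.mul_le_mul_left m (by omega)
    omega
  have hpow : ((2 : ℝ) ^ q) ^ 8 ≤ (2 ^ n.choose 2 * ρ ^ (n * m)) ^ 8 :=
    calc ((2 : ℝ) ^ q) ^ 8 ≤ 2 ^ (8 * n.choose 2) * (1 / 2) ^ (n * m) := by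
          rw [← pow_mul, one_div, inv_pow, le_mul_inv_iff₀ (by positivity), ← pow_add]
          exact pow_le_pow_right₀ one_le_two (by omega)
      _ ≤ 2 ^ (8 * n.choose 2) * (ρ ^ 8) ^ (n * m) := by gcongr
      _ = (2 ^ n.choose 2 * ρ ^ (n * m)) ^ 8 := by ring
  calc (Nat.card {G : SimpleGraph V // σ ∈ G.autGroup} : ℝ) ≤ 2 ^ q := by
        exact_mod_cast card_mem_autGroup_le σ
    _ ≤ 2 ^ n.choose 2 * ρ ^ (n * m) :=
        le_of_pow_le_pow_left₀ (by norm_num) (by positivity) hpow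

end FixedGraphs

section PermutationCount

variable {α : Type*} [Fintype α] [DecidableEq α]

/-- A permutation is determined by the set of pairs `(x, σ x)` with `x` in its support. -/
theorem Equiv.Perm.card_filter_card_support_eq_le (k : ℕ) :
    #{σ : Perm α | #σ.support = k} ≤ (Fintype.card α ^ 2) ^ k := by
  let graph : Perm α → Finset (α × α) := fun σ => σ.support.image fun x => (x, σ x)
  have hcard : ∀ σ : Perm α, #(graph σ) = #σ.support := fun σ =>
    card_image_of_injective _ fun _ _ h => congrArg Prod.fst h
  have hmem : ∀ σ : Perm α, ∀ x ∈ σ.support, (x, σ x) ∈ graph σ := fun σ x hx =>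
    mem_image_of_mem _ hx
  have happly : ∀ σ τ : Perm α, graph σ = graph τ → ∀ x ∈ τ.support, σ x = τ x := by
    intro σ τ h x hx
    obtain ⟨y, -, hy⟩ := mem_image.mp (h ▸ hmem τ x hx)
    obtain ⟨rfl, hy⟩ := Prod.mk.inj hy
    exact hy
  have hinj : Set.InjOn graph {σ | #σ.support = k} := by
    intro σ _ τ _ h
    refine support_congr (fun x hx => ?_) (happly σ τ h)
    rw [Perm.mem_support, happly τ σ h.symm x hx]
    exact Perm.mem_support.mp hx
  calc #{σ : Perm α | #σ.support = k}
      ≤ #(powersetCard k (univ : Finset (α × α))) :=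
        card_le_card_of_injOn graph
          (fun σ hσ =>
            mem_powersetCard.mpr ⟨subset_univ _, (hcard σ).trans (mem_filter.mp hσ).2⟩)
          (by simpa using hinj)
    _ ≤ (Fintype.card α ^ 2) ^ k := by
        rw [card_powersetCard, card_univ, Fintype.card_prod, ← sq]
        exact Nat.choose_le_pow _ _

theorem Equiv.Perm.sum_pow_card_support_le {y : ℝ} (hy0 : 0 ≤ y)
    (hy : (Fintype.card α : ℝ) ^ 2 * y ≤ 1) :
    ∑ σ ∈ univ.erase (1 : Perm α), y ^ #σ.support ≤
      Fintype.card α * ((Fintype.card α : ℝ) ^ 2 * y) ^ 2 := by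
  set n := Fintype.card α
  have hmaps : ∀ σ ∈ univ.erase (1 : Perm α), #σ.support ∈ Icc 2 n := fun σ hσ =>
    mem_Icc.mpr ⟨two_le_card_support_of_ne_one (ne_of_mem_erase hσ), card_le_univ _⟩
  have hterm : ∀ k ∈ Icc 2 n,
      ∑ σ ∈ univ.erase (1 : Perm α) with #σ.support = k, y ^ #σ.support ≤
        ((n : ℝ) ^ 2 * y) ^ 2 := by
    intro k hk
    have hcount : #{σ ∈ univ.erase (1 : Perm α) | #σ.support = k} ≤ (n ^ 2) ^ k :=
      (card_le_card (filter_subset_filter _ (erase_subset _ _))).trans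
        (card_filter_card_support_eq_le k)
    calc ∑ σ ∈ univ.erase (1 : Perm α) with #σ.support = k, y ^ #σ.support
        = #{σ ∈ univ.erase (1 : Perm α) | #σ.support = k} * y ^ k := by
          rw [sum_congr rfl fun σ hσ => by rw [(mem_filter.mp hσ).2], sum_const, nsmul_eq_mul]
      _ ≤ ((n : ℝ) ^ 2) ^ k * y ^ k := by gcongr; exact_mod_cast hcount
      _ = ((n : ℝ) ^ 2 * y) ^ k := (mul_pow _ _ _).symm
      _ ≤ ((n : ℝ) ^ 2 * y) ^ 2 := pow_le_pow_of_le_one (by positivity) hy (mem_Icc.mp hk).1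
  calc ∑ σ ∈ univ.erase (1 : Perm α), y ^ #σ.support
      = ∑ k ∈ Icc 2 n,
          ∑ σ ∈ univ.erase (1 : Perm α) with #σ.support = k, y ^ #σ.support :=
        (sum_fiberwise_of_maps_to hmaps _).symm
    _ ≤ ∑ _k ∈ Icc 2 n, ((n : ℝ) ^ 2 * y) ^ 2 := sum_le_sum hterm
    _ ≤ n * ((n : ℝ) ^ 2 * y) ^ 2 := by
        rw [sum_const, nsmul_eq_mul, Nat.card_Icc]
        gcongr
        exact_mod_cast (by omega : n + 1 - 2 ≤ n)

end PermutationCount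

section Asymmetric

variable {V : Type*} [Fintype V] [DecidableEq V]

theorem SimpleGraph.card_not_asymmetric_le_sum :
    Nat.card {G : SimpleGraph V // ¬ ∀ φ : G ≃g G, ∀ v, φ v = v} ≤
      ∑ σ ∈ univ.erase (1 : Perm V), Nat.card {G : SimpleGraph V // σ ∈ G.autGroup} := by
  classical
  simp only [Nat.card_eq_fintype_card, Fintype.card_subtype]
  refine (card_le_card fun G hG => ?_).trans card_biUnion_le
  obtain ⟨φ, v, hv⟩ : ∃ φ : G ≃g G, ∃ v, φ v ≠ v := by simpa using hG
  refine mem_biUnion.mpr ⟨φ.toEquiv, mem_erase.mpr ⟨fun h => hv ?_, mem_univ _⟩,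
    mem_filter.mpr ⟨mem_univ _, fun u w => φ.map_adj_iff⟩⟩
  exact DFunLike.congr_fun h v

theorem SimpleGraph.card_not_asymmetric_div_le {ρ : ℝ} (hρ0 : 0 ≤ ρ) (hρ : 1 / 2 ≤ ρ ^ 8)
    (hV : 4 ≤ Fintype.card V) (hsmall : (Fintype.card V : ℝ) ^ 2 * ρ ^ Fintype.card V ≤ 1) :
    (Nat.card {G : SimpleGraph V // ¬ ∀ φ : G ≃g G, ∀ v, φ v = v} : ℝ) /
        2 ^ (Fintype.card V).choose 2 ≤
      Fintype.card V * ((Fintype.card V : ℝ) ^ 2 * ρ ^ Fintype.card V) ^ 2 := by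
  set n := Fintype.card V
  rw [div_le_iff₀' (by positivity)]
  calc (Nat.card {G : SimpleGraph V // ¬ ∀ φ : G ≃g G, ∀ v, φ v = v} : ℝ)
      ≤ ∑ σ ∈ univ.erase (1 : Perm V),
          (Nat.card {G : SimpleGraph V // σ ∈ G.autGroup} : ℝ) := by
        exact_mod_cast card_not_asymmetric_le_sum
    _ ≤ ∑ σ ∈ univ.erase (1 : Perm V), 2 ^ n.choose 2 * (ρ ^ n) ^ #σ.support :=
        sum_le_sum fun σ _ => by rw [← pow_mul]; exact card_mem_autGroup_le_pow hρ0 hρ hV σ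
    _ ≤ 2 ^ n.choose 2 * (n * ((n : ℝ) ^ 2 * ρ ^ n) ^ 2) := by
        rw [← mul_sum]
        gcongr
        exact sum_pow_card_support_le (by positivity) hsmall

theorem SimpleGraph.card_asymmetric_div_eq :
    (Nat.card {G : SimpleGraph V // ∀ φ : G ≃g G, ∀ v, φ v = v} : ℝ) /
        2 ^ (Fintype.card V).choose 2 =
      1 - Nat.card {G : SimpleGraph V // ¬ ∀ φ : G ≃g G, ∀ v, φ v = v} /
        2 ^ (Fintype.card V).choose 2 := by
  classical
  have hsum := Nat.card_sum.symm.trans (Nat.card_congr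
    (Equiv.sumCompl fun G : SimpleGraph V => ∀ φ : G ≃g G, ∀ v, φ v = v))
  rw [SimpleGraph.natCard_eq_two_pow] at hsum
  rw [eq_sub_iff_add_eq, ← add_div, div_eq_one_iff_eq (by positivity)]
  exact_mod_cast hsum

end Asymmetric

theorem tendsto_mul_sq_mul_pow_atTop_zero {ρ : ℝ} (hρ0 : 0 ≤ ρ) (hρ : ρ < 1) :
    Tendsto (fun n : ℕ => (n : ℝ) * ((n : ℝ) ^ 2 * ρ ^ n) ^ 2) atTop (𝓝 0) := by
  have h := tendsto_pow_const_mul_const_pow_of_abs_lt_one 5 (r := ρ ^ 2)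
    (by rw [abs_of_nonneg (by positivity)]; exact pow_lt_one₀ hρ0 hρ two_ne_zero)
  refine h.congr fun n => ?_
  ring

/-- **Erdős–Rényi.** The proportion of graphs on `n` labelled vertices that are asymmetric
(i.e. have trivial automorphism group) tends to `1` as `n → ∞`. -/
theorem asymmetric_graphs_proportion_tendsto_one :
    Filter.Tendsto
      (fun n : ℕ =>
        (Nat.card {Γ : SimpleGraph (Fin n) // ∀ φ : Γ ≃g Γ, ∀ v, φ v = v} : ℝ) /
          2 ^ n.choose 2)
      Filter.atTop (nhds 1) := by
  let ρ : ℝ := 15 / 16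
  have hρ0 : 0 ≤ ρ := by norm_num
  have hρ1 : ρ < 1 := by norm_num
  have hρ8 : 1 / 2 ≤ ρ ^ 8 := by norm_num
  have hsmall : ∀ᶠ n : ℕ in atTop, (n : ℝ) ^ 2 * ρ ^ n ≤ 1 :=
    (tendsto_pow_const_mul_const_pow_of_abs_lt_one 2
      (by rwa [abs_of_nonneg hρ0])).eventually_le_const one_pos
  have hbad : Tendsto (fun n : ℕ =>
      (Nat.card {Γ : SimpleGraph (Fin n) // ¬ ∀ φ : Γ ≃g Γ, ∀ v, φ v = v} : ℝ) /
        2 ^ n.choose 2) atTop (𝓝 0) := by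
    refine squeeze_zero' (.of_forall fun n => by positivity) ?_
      (tendsto_mul_sq_mul_pow_atTop_zero hρ0 hρ1)
    filter_upwards [eventually_ge_atTop 4, hsmall] with n hn hsmall
    simpa using SimpleGraph.card_not_asymmetric_div_le (V := Fin n) hρ0 hρ8
      (by simpa using hn) (by simpa using hsmall)
  refine (sub_zero (1 : ℝ) ▸ hbad.const_sub 1).congr fun n => ?_
  simpa using (SimpleGraph.card_asymmetric_div_eq (V := Fin n)).symm
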